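/- Suppose n ≥ 3 (i.e. j ≥ 3/2). Then the Landau–Streater channel Φ is not antidegradable: there is no quantum channel T′ with Φ = T′ ∘ Φ̃. Concretely, there do not exist a natural number N and matrices T₁,…,T_N of size d×3 with Σ_{i=1}^{N} T_i† T_i = I₃ such that Φ(X) = Σ_{i=1}^{N} T_i Φ̃(X) T_i† for every X ∈ M_d(ℂ). -/
import Mathlib


open Matrix Complex

noncomputable section

/-- Spin-z matrix for spin j = n/2 in dimension d = n+1: diagonal with entries j - k. -/
def Jz (n : ℕ) : Matrix (Fin (n+1)) (Fin (n+1)) ℂ :=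
  Matrix.diagonal fun k => (n : ℂ) / 2 - (k : ℕ)

/-- Raising operator `J₊`, with entries `(J₊)_{k,k+1} = √((k+1)(n-k))`. -/
def Jp (n : ℕ) : Matrix (Fin (n+1)) (Fin (n+1)) ℂ :=
  Matrix.of fun a b =>
    if (a : ℕ) + 1 = (b : ℕ) then ((Real.sqrt (((a : ℕ) + 1) * (n - (a : ℕ))) : ℝ) : ℂ) else 0

/-- Lowering operator `J₋ = (J₊)†`. -/
def Jm (n : ℕ) : Matrix (Fin (n+1)) (Fin (n+1)) ℂ := (Jp n)ᴴ

/-- `J_x = (J₊ + J₋)/2`. -/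
def Jx (n : ℕ) : Matrix (Fin (n+1)) (Fin (n+1)) ℂ := (1/2 : ℂ) • (Jp n + Jm n)

/-- `J_y = (J₊ - J₋)/(2i)`. -/
def Jy (n : ℕ) : Matrix (Fin (n+1)) (Fin (n+1)) ℂ := (1/(2 * Complex.I)) • (Jp n - Jm n)

/-- The Landau–Streater map `Φ(X) = (JₓXJₓ + J_yXJ_y + J_zXJ_z)/(j(j+1))`. -/
def LS (n : ℕ) (X : Matrix (Fin (n+1)) (Fin (n+1)) ℂ) : Matrix (Fin (n+1)) (Fin (n+1)) ℂ :=
  (((n : ℂ)/2) * ((n : ℂ)/2 + 1))⁻¹ • (Jx n * X * Jx n + Jy n * X * Jy n + Jz n * X * Jz n)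

end

/-- The triple `(J₁,J₂,J₃) = (Jₓ,J_y,J_z)`. -/
noncomputable def Jvec (n : ℕ) : Fin 3 → Matrix (Fin (n+1)) (Fin (n+1)) ℂ :=
  ![Jx n, Jy n, Jz n]

/-- The channel complementary to the Landau–Streater channel,
`(Φ̃(X))_{αβ} = tr(J_α X J_β)/(j(j+1))`. -/
noncomputable def LScompl (n : ℕ) (X : Matrix (Fin (n+1)) (Fin (n+1)) ℂ) :
    Matrix (Fin 3) (Fin 3) ℂ :=
  Matrix.of fun α β =>
    (((n : ℂ)/2) * ((n : ℂ)/2 + 1))⁻¹ * (Jvec n α * X * Jvec n β).trace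

lemma Jp_apply (n : ℕ) (a b : Fin (n+1)) :
    Jp n a b = if (a : ℕ) + 1 = (b : ℕ) then ((Real.sqrt (((a : ℕ) + 1) * (n - (a : ℕ))) : ℝ) : ℂ) else 0 := rfl

lemma Jm_apply (n : ℕ) (a b : Fin (n+1)) :
    Jm n a b = if (b : ℕ) + 1 = (a : ℕ) then ((Real.sqrt (((b : ℕ) + 1) * (n - (b : ℕ))) : ℝ) : ℂ) else 0 := by
  simp only [Jm, Matrix.conjTranspose_apply, Jp_apply]
  split <;> simp

lemma Jz_apply (n : ℕ) (a b : Fin (n+1)) :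
    Jz n a b = if a = b then (n : ℂ) / 2 - (a : ℕ) else 0 := by
  simp [Jz, Matrix.diagonal_apply]

lemma Jx_col0 (n : ℕ) (i : Fin (n+1)) (h0 : (0:ℕ) < n+1) (hi : 2 ≤ (i:ℕ)) :
    Jx n i ⟨0, h0⟩ = 0 := by
  simp only [Jx, Matrix.smul_apply, Matrix.add_apply, Jp_apply, Jm_apply]
  rw [if_neg (by omega), if_neg (by simp; omega)]
  simp

lemma Jy_col0 (n : ℕ) (i : Fin (n+1)) (h0 : (0:ℕ) < n+1) (hi : 2 ≤ (i:ℕ)) :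
    Jy n i ⟨0, h0⟩ = 0 := by
  simp only [Jy, Matrix.smul_apply, Matrix.sub_apply, Jp_apply, Jm_apply]
  rw [if_neg (by omega), if_neg (by simp; omega)]
  simp

lemma Jz_col0 (n : ℕ) (i : Fin (n+1)) (h0 : (0:ℕ) < n+1) (hi : 2 ≤ (i:ℕ)) :
    Jz n i ⟨0, h0⟩ = 0 := by
  rw [Jz_apply, if_neg]
  intro h
  have : (i : ℕ) = 0 := by rw [h]
  omega

lemma Jx_row3 (n : ℕ) (i : Fin (n+1)) (h3 : (3:ℕ) < n+1) (hi : (i:ℕ) < 2) :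
    Jx n ⟨3, h3⟩ i = 0 := by
  simp only [Jx, Matrix.smul_apply, Matrix.add_apply, Jp_apply, Jm_apply]
  rw [if_neg (by simp; omega), if_neg (by simp; omega)]
  simp

lemma Jy_row3 (n : ℕ) (i : Fin (n+1)) (h3 : (3:ℕ) < n+1) (hi : (i:ℕ) < 2) :
    Jy n ⟨3, h3⟩ i = 0 := by
  simp only [Jy, Matrix.smul_apply, Matrix.sub_apply, Jp_apply, Jm_apply]
  rw [if_neg (by simp; omega), if_neg (by simp; omega)]
  simp

lemma Jz_row3 (n : ℕ) (i : Fin (n+1)) (h3 : (3:ℕ) < n+1) (hi : (i:ℕ) < 2) :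
    Jz n ⟨3, h3⟩ i = 0 := by
  rw [Jz_apply, if_neg]
  intro h
  have : (3 : ℕ) = (i : ℕ) := by rw [← h]
  omega

lemma sand {m : ℕ} (A B : Matrix (Fin m) (Fin m) ℂ) (p q i j : Fin m) :
    (A * Matrix.single p q (1:ℂ) * B) i j = A i p * B q j := by
  simp [Matrix.mul_apply, Matrix.single, ite_and, Finset.mul_sum, Finset.sum_mul]

lemma sand_trace {m : ℕ} (A B : Matrix (Fin m) (Fin m) ℂ) (p q : Fin m) :
    (A * Matrix.single p q (1:ℂ) * B).trace = ∑ i, A i p * B q i := by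
  simp [Matrix.trace, Matrix.diag, sand]

lemma key_trace {n : ℕ} (h3 : (3:ℕ) < n+1) (A B : Matrix (Fin (n+1)) (Fin (n+1)) ℂ)
    (hA : ∀ i : Fin (n+1), 2 ≤ (i:ℕ) → A i ⟨0, by omega⟩ = 0)
    (hB : ∀ i : Fin (n+1), (i:ℕ) < 2 → B ⟨3, h3⟩ i = 0) :
    (A * Matrix.single (⟨0, by omega⟩ : Fin (n+1)) (⟨3, h3⟩ : Fin (n+1)) (1:ℂ) * B).trace = 0 := by
  rw [sand_trace]
  apply Finset.sum_eq_zero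
  intro i _
  rcases lt_or_ge (i : ℕ) 2 with h | h
  · rw [hB i h, mul_zero]
  · rw [hA i h, zero_mul]

lemma LS_entry {n : ℕ} (p q i j : Fin (n+1)) :
    LS n (Matrix.single p q (1:ℂ)) i j =
      (((n : ℂ)/2) * ((n : ℂ)/2 + 1))⁻¹ *
        (Jx n i p * Jx n q j + Jy n i p * Jy n q j + Jz n i p * Jz n q j) := by
  simp [LS, Matrix.smul_apply, Matrix.add_apply, sand]

/-- for `n ≥ 3` (i.e. `j ≥ 3/2`) the Landau–Streater channel is not
antidegradable: there is no quantum channel `T'` (given by Kraus operators `Tᵢ : d×3` with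
`Σᵢ Tᵢ†Tᵢ = I₃`) with `Φ = T' ∘ Φ̃`. -/
theorem landau_streater_not_antidegradable (n : ℕ) (hn : 3 ≤ n) :
    ¬ ∃ (N : ℕ) (T : Fin N → Matrix (Fin (n+1)) (Fin 3) ℂ),
        (∑ i, (T i)ᴴ * T i = (1 : Matrix (Fin 3) (Fin 3) ℂ)) ∧
        ∀ X : Matrix (Fin (n+1)) (Fin (n+1)) ℂ,
          LS n X = ∑ i, T i * LScompl n X * (T i)ᴴ := by
  rintro ⟨N, T, hT, h⟩
  have h3 : (3:ℕ) < n+1 := by omega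
  have h0' : (0:ℕ) < n+1 := by omega
  set p : Fin (n+1) := ⟨0, h0'⟩ with hp
  set q : Fin (n+1) := ⟨3, h3⟩ with hq
  set X : Matrix (Fin (n+1)) (Fin (n+1)) ℂ := Matrix.single p q (1:ℂ) with hX
  have hcompl : LScompl n X = 0 := by
    funext α β
    show (((n : ℂ)/2) * ((n : ℂ)/2 + 1))⁻¹ * (Jvec n α * X * Jvec n β).trace = 0
    have htr : (Jvec n α * X * Jvec n β).trace = 0 := by
      apply key_trace h3
      · fin_cases α
        · exact fun i hi => Jx_col0 n i h0' hi
        · exact fun i hi => Jy_col0 n i h0' hi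
        · exact fun i hi => Jz_col0 n i h0' hi
      · fin_cases β
        · exact fun i hi => Jx_row3 n i h3 hi
        · exact fun i hi => Jy_row3 n i h3 hi
        · exact fun i hi => Jz_row3 n i h3 hi
    rw [htr, mul_zero]
  have h0 : LS n X = 0 := by
    rw [h X, hcompl]
    simp
  -- nonzero constant
  have hcne : (((n : ℂ)/2) * ((n : ℂ)/2 + 1)) ≠ 0 := by
    apply mul_ne_zero
    · have : (n:ℂ) ≠ 0 := Nat.cast_ne_zero.mpr (by omega)
      simpa using this
    · have heq : (n:ℂ)/2 + 1 = (((n:ℝ)/2 + 1 : ℝ) : ℂ) := by push_cast; ring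
      rw [heq, Complex.ofReal_ne_zero]
      positivity
  by_cases h6 : n = 6
  · -- use entry (1,4)
    subst h6
    have h1 : (1:ℕ) < 7 := by omega
    have h4 : (4:ℕ) < 7 := by omega
    have e14 : LS 6 X ⟨1, h1⟩ ⟨4, h4⟩ = 0 := by rw [h0]; rfl
    rw [LS_entry] at e14
    rw [Jz_apply, if_neg (by intro hh; exact absurd (congrArg Fin.val hh) (by norm_num))] at e14
    simp only [Jx, Jy, Matrix.smul_apply, Matrix.add_apply, Matrix.sub_apply,
      Jp_apply, Jm_apply] at e14
    norm_num at e14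
    -- now e14 should be an equation in sqrt values; derive contradiction
    have h6pos : (0:ℝ) < Real.sqrt 6 := Real.sqrt_pos.mpr (by norm_num)
    have h12pos : (0:ℝ) < Real.sqrt 12 := Real.sqrt_pos.mpr (by norm_num)
    rw [Complex.ext_iff] at e14
    simp [Complex.add_re, Complex.add_im, Complex.mul_re, Complex.mul_im, Complex.I_re,
      Complex.I_im, Complex.ofReal_re, Complex.ofReal_im, Complex.neg_re, Complex.neg_im,
      Complex.div_re, Complex.div_im] at e14
  · -- use entry (0,3)
    have e03 : LS n X p q = 0 := by rw [h0]; rfl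
    rw [LS_entry] at e03
    have hxpp : Jx n p p = 0 := by
      simp only [Jx, Matrix.smul_apply, Matrix.add_apply, Jp_apply, Jm_apply, hp]
      norm_num
    have hypp : Jy n p p = 0 := by
      simp only [Jy, Matrix.smul_apply, Matrix.sub_apply, Jp_apply, Jm_apply, hp]
      norm_num
    have hxqq : Jx n q q = 0 := by
      simp only [Jx, Matrix.smul_apply, Matrix.add_apply, Jp_apply, Jm_apply, hq]
      norm_num
    have hyqq : Jy n q q = 0 := by
      simp only [Jy, Matrix.smul_apply, Matrix.sub_apply, Jp_apply, Jm_apply, hq]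
      norm_num
    have hzpp : Jz n p p = (n:ℂ)/2 := by rw [Jz_apply, if_pos rfl]; simp [hp]
    have hzqq : Jz n q q = (n:ℂ)/2 - 3 := by rw [Jz_apply, if_pos rfl]; simp [hq]
    rw [hxpp, hypp, hzpp, hzqq] at e03
    simp only [zero_mul, mul_zero, zero_add] at e03
    have hinv : (((n : ℂ)/2) * ((n : ℂ)/2 + 1))⁻¹ ≠ 0 := inv_ne_zero hcne
    have hn2 : (n:ℂ)/2 ≠ 0 := by
      have : (n:ℂ) ≠ 0 := Nat.cast_ne_zero.mpr (by omega)
      simpa using this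
    have hn3 : (n:ℂ)/2 - 3 ≠ 0 := by
      intro hh
      have : (n:ℂ) = 6 := by linear_combination 2 * hh
      exact h6 (by exact_mod_cast this)
    exact (mul_ne_zero hinv (mul_ne_zero hn2 hn3)) e03
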